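/- Let P = (|P|, ≼) be a finite poset, S a chain in P, and x, y two ≼-incomparable elements of |P| − S. Let ≼_{x,y} be the partial order on |P| defined by: w ≼_{x,y} z iff w ≼ z, or (w ≼ x and y ≼ z). Write ↓u = {z : z ≼ u} and ↑u = {z : u ≼ z}. Then the following are equivalent: (a) there is some u ∈ |P| that is ≼-incomparable with at least one element of S but ≼_{x,y}-comparable with every element of S; (b) one of x or y is ≼-incomparable with at least one element of S but ≼_{x,y}-comparable with every element of S; (c) (↓x ∩ S) ∪ (↑y ∩ S) = S but (↓y ∩ S) ∪ (↑x ∩ S) ≠ S. -/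
import Mathlib


/-- The weakest partial order strengthening `≤` in which `x ≤ y`:
`w ≼_{x,y} z` iff `w ≤ z`, or (`w ≤ x` and `y ≤ z`). -/
def relXY {α : Type*} [PartialOrder α] (x y : α) (w z : α) : Prop :=
  w ≤ z ∨ (w ≤ x ∧ y ≤ z)

/-- Corollary to the proof of the strengthening lemma. Let `P` be a finite
poset, `S` a chain in `P`, and `x, y` two incomparable elements of `|P| − S`. Then the
following are equivalent: (a) some `u` is `≤`-incomparable with at least one element of `S`
but `≼_{x,y}`-comparable with every element of `S`; (b) one of `x` or `y` has that property;
(c) `(↓x ∩ S) ∪ (↑y ∩ S) = S` but `(↓y ∩ S) ∪ (↑x ∩ S) ≠ S`. -/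
theorem relXY_comparability_tfae (α : Type*) [Fintype α] [PartialOrder α]
    (S : Set α) (hS : IsChain (· ≤ ·) S) (x y : α) (hx : x ∉ S) (hy : y ∉ S)
    (hxy : ¬ x ≤ y ∧ ¬ y ≤ x) :
    ((∃ u : α, (∃ s ∈ S, ¬ u ≤ s ∧ ¬ s ≤ u) ∧ ∀ s ∈ S, relXY x y u s ∨ relXY x y s u) ↔
      (((∃ s ∈ S, ¬ x ≤ s ∧ ¬ s ≤ x) ∧ ∀ s ∈ S, relXY x y x s ∨ relXY x y s x) ∨
       ((∃ s ∈ S, ¬ y ≤ s ∧ ¬ s ≤ y) ∧ ∀ s ∈ S, relXY x y y s ∨ relXY x y s y))) ∧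
    ((((∃ s ∈ S, ¬ x ≤ s ∧ ¬ s ≤ x) ∧ ∀ s ∈ S, relXY x y x s ∨ relXY x y s x) ∨
      ((∃ s ∈ S, ¬ y ≤ s ∧ ¬ s ≤ y) ∧ ∀ s ∈ S, relXY x y y s ∨ relXY x y s y)) ↔
      (({z : α | z ≤ x} ∩ S) ∪ ({z : α | y ≤ z} ∩ S) = S ∧
       ({z : α | z ≤ y} ∩ S) ∪ ({z : α | x ≤ z} ∩ S) ≠ S)) := by
  obtain ⟨hxy1, hxy2⟩ := hxy
  have key : ∀ a b : α, (({z : α | z ≤ a} ∩ S) ∪ ({z : α | b ≤ z} ∩ S) = S ↔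
      ∀ s ∈ S, s ≤ a ∨ b ≤ s) := by
    intro a b
    constructor
    · intro h s hs
      have hmem : s ∈ ({z : α | z ≤ a} ∩ S) ∪ ({z : α | b ≤ z} ∩ S) := h.symm ▸ hs
      rcases hmem with h' | h'
      · exact Or.inl h'.1
      · exact Or.inr h'.1
    · intro h
      apply Set.Subset.antisymm
      · rintro z (⟨_, hzS⟩ | ⟨_, hzS⟩) <;> exact hzS
      · intro s hs
        rcases h s hs with h' | h'
        · exact Or.inl ⟨h', hs⟩
        · exact Or.inr ⟨h', hs⟩
  have a2c : (∃ u : α, (∃ s ∈ S, ¬ u ≤ s ∧ ¬ s ≤ u) ∧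
      ∀ s ∈ S, relXY x y u s ∨ relXY x y s u) →
      (({z : α | z ≤ x} ∩ S) ∪ ({z : α | y ≤ z} ∩ S) = S ∧
       ({z : α | z ≤ y} ∩ S) ∪ ({z : α | x ≤ z} ∩ S) ≠ S) := by
    rintro ⟨u, ⟨s₀, hs₀S, hus₀, hs₀u⟩, hcomp⟩
    rcases hcomp s₀ hs₀S with (h | ⟨hux, hys₀⟩) | (h | ⟨hs₀x, hyu⟩)
    · exact absurd h hus₀
    · -- Case A : u ≤ x, y ≤ s₀
      have C1 : ∀ s ∈ S, s ≤ x ∨ y ≤ s := by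
        intro s hsS
        rcases hcomp s hsS with (hus | ⟨_, hys⟩) | (hsu | ⟨_, hyu⟩)
        · rcases hS.total hs₀S hsS with h | h
          · exact Or.inr (hys₀.trans h)
          · exact absurd (hus.trans h) hus₀
        · exact Or.inr hys
        · exact Or.inl (hsu.trans hux)
        · exact absurd (hyu.trans hux) hxy2
      refine ⟨(key x y).mpr C1, fun hC2 => ?_⟩
      rcases (key y x).mp hC2 s₀ hs₀S with h | h
      · exact hy ((le_antisymm h hys₀ : s₀ = y) ▸ hs₀S)
      · exact hus₀ (hux.trans h)
    · exact absurd h hs₀u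
    · -- Case B : s₀ ≤ x, y ≤ u
      have C1 : ∀ s ∈ S, s ≤ x ∨ y ≤ s := by
        intro s hsS
        rcases hcomp s hsS with (hus | ⟨hux, _⟩) | (hsu | ⟨hsx, _⟩)
        · exact Or.inr (hyu.trans hus)
        · exact absurd (hyu.trans hux) hxy2
        · rcases hS.total hs₀S hsS with h | h
          · exact absurd (h.trans hsu) hs₀u
          · exact Or.inl (h.trans hs₀x)
        · exact Or.inl hsx
      refine ⟨(key x y).mpr C1, fun hC2 => ?_⟩
      rcases (key y x).mp hC2 s₀ hs₀S with h | h
      · exact hs₀u (h.trans hyu)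
      · exact hx ((le_antisymm hs₀x h : s₀ = x) ▸ hs₀S)
  have c2b : (({z : α | z ≤ x} ∩ S) ∪ ({z : α | y ≤ z} ∩ S) = S ∧
       ({z : α | z ≤ y} ∩ S) ∪ ({z : α | x ≤ z} ∩ S) ≠ S) →
      (((∃ s ∈ S, ¬ x ≤ s ∧ ¬ s ≤ x) ∧ ∀ s ∈ S, relXY x y x s ∨ relXY x y s x) ∨
       ((∃ s ∈ S, ¬ y ≤ s ∧ ¬ s ≤ y) ∧ ∀ s ∈ S, relXY x y y s ∨ relXY x y s y)) := by
    rintro ⟨hC1, hC2⟩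
    have C1 := (key x y).mp hC1
    have hxall : ∀ s ∈ S, relXY x y x s ∨ relXY x y s x := by
      intro s hs
      rcases C1 s hs with h | h
      · exact Or.inr (Or.inl h)
      · exact Or.inl (Or.inr ⟨le_refl x, h⟩)
    have hyall : ∀ s ∈ S, relXY x y y s ∨ relXY x y s y := by
      intro s hs
      rcases C1 s hs with h | h
      · exact Or.inr (Or.inr ⟨h, le_refl y⟩)
      · exact Or.inl (Or.inl h)
    have hne : ¬ ∀ s ∈ S, s ≤ y ∨ x ≤ s := fun h => hC2 ((key y x).mpr h)
    push_neg at hne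
    obtain ⟨s₁, hs₁S, hs₁y, hxs₁⟩ := hne
    by_cases h : s₁ ≤ x
    · exact Or.inr ⟨⟨s₁, hs₁S, fun hys₁ => hxy2 (hys₁.trans h), hs₁y⟩, hyall⟩
    · exact Or.inl ⟨⟨s₁, hs₁S, hxs₁, h⟩, hxall⟩
  have b2a : (((∃ s ∈ S, ¬ x ≤ s ∧ ¬ s ≤ x) ∧ ∀ s ∈ S, relXY x y x s ∨ relXY x y s x) ∨
       ((∃ s ∈ S, ¬ y ≤ s ∧ ¬ s ≤ y) ∧ ∀ s ∈ S, relXY x y y s ∨ relXY x y s y)) →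
      (∃ u : α, (∃ s ∈ S, ¬ u ≤ s ∧ ¬ s ≤ u) ∧
        ∀ s ∈ S, relXY x y u s ∨ relXY x y s u) := by
    rintro (⟨hinc, hc⟩ | ⟨hinc, hc⟩)
    · exact ⟨x, hinc, hc⟩
    · exact ⟨y, hinc, hc⟩
  exact ⟨⟨fun ha => c2b (a2c ha), b2a⟩, ⟨fun hb => a2c (b2a hb), c2b⟩⟩
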